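/- Let Aᵢ• (1 ≤ i ≤ 4) be complexes of R-modules with endomorphisms φᵢ, such that cup products ∪_A : A₁• ⊗ A₂• → A₃• and ∪_A : A₂• ⊗ A₁• → A₄• are compatible with the φᵢ. Suppose 𝒯₁, 𝒯₂ are endomorphisms of A₁•, A₂• commuting with φ₁, φ₂, and 𝒯₃₄ : A₃• → A₄• commutes with φ₃, φ₄, and the diagram ∪_A ∘ s₁₂ ∘ (𝒯₁ ⊗ 𝒯₂) = 𝒯₃₄ ∘ ∪_A commutes, where s₁₂(a ⊗ b) = (−1)^{deg a · deg b} b ⊗ a. Then on total complexes, the morphisms 𝒯₃₄ ∘ ∪_A^T and ∪_A^T ∘ s₁₂ ∘ (𝒯₁ ⊗ 𝒯₂) : T•(A₁•) ⊗ T•(A₂•) → T•(A₄•) are homotopic, with explicit homotopy h_𝒯((x_{n−1},x_n) ⊗ (y_{m−1},y_m)) = (−1)^{n−1}(𝒯₃₄(x_{n−1} ∪_A y_{m−1}), 0). -/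

import Mathlib

/-- A cochain complex of `R`-modules indexed by `ℤ`. -/
structure Cx (R : Type) [CommRing R] where
  X : ℤ → Type
  [ab : ∀ n, AddCommGroup (X n)]
  [md : ∀ n, Module R (X n)]
  d : ∀ n, X n →ₗ[R] X (n + 1)
  dsq : ∀ n (x : X n), d (n + 1) (d n x) = 0

attribute [instance] Cx.ab Cx.md

/-- A morphism of complexes of `R`-modules. -/
structure Mor {R : Type} [CommRing R] (A B : Cx R) where
  f : ∀ n, A.X n →ₗ[R] B.X n
  comm : ∀ n (x : A.X n), B.d n (f n x) = f (n + 1) (A.d n x)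

/-- The differential of the total complex `T•(A•) = Tot(A• --(φ-1)--> A•)`.
Here `T^{n+1}(A) = Aⁿ ⊕ Aⁿ⁺¹` and
`d(a_{n}, a_{n+1}) = (d a_n + (-1)^{n+1} (φ-1) a_{n+1}, d a_{n+1})`. -/
def Td {R : Type} [CommRing R] (A : Cx R) (φ : Mor A A) (n : ℤ)
    (p : A.X n × A.X (n + 1)) : A.X (n + 1) × A.X (n + 1 + 1) :=
  (A.d n p.1 + (Int.negOnePow (n + 1) : ℤ) • (φ.f (n + 1) p.2 - p.2),
    A.d (n + 1) p.2)

/-- The map induced on total complexes by a morphism `α` (componentwise). -/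
def Tmor {R : Type} [CommRing R] {A B : Cx R} (α : Mor A B) (n : ℤ)
    (p : A.X n × A.X (n + 1)) : B.X n × B.X (n + 1) :=
  (α.f n p.1, α.f (n + 1) p.2)
/-- A morphism of complexes `A• ⊗ B• → C•`, given by its bilinear components
`Aⁿ ⊗ Bᵐ → Cⁿ⁺ᵐ` satisfying the Leibniz rule
`d(x ∪ y) = dx ∪ y + (-1)ⁿ x ∪ dy`. -/
structure Cup {R : Type} [CommRing R] (A B C : Cx R) where
  c : ∀ n m k, n + m = k → A.X n →ₗ[R] B.X m →ₗ[R] C.X k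
  leib : ∀ (n m k : ℤ) (hk : n + m = k) (x : A.X n) (y : B.X m),
    C.d k (c n m k hk x y)
      = c (n + 1) m (k + 1) (by omega) (A.d n x) y
        + (Int.negOnePow n : ℤ) • c n (m + 1) (k + 1) (by omega) x (B.d m y)

/-- The cup product `∪ᵀ : T•(A₁•) ⊗ T•(A₂•) → T•(A₃•)` induced by
`∪ : A₁• ⊗ A₂• → A₃•`:
`(x_{n}, x_{n+1}) ∪ᵀ (y_{m}, y_{m+1}) =
  (x_{n+1} ∪ y_m + (-1)^{m+1} x_n ∪ φ₂(y_{m+1}), x_{n+1} ∪ y_{m+1})`. -/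
def cupT {R : Type} [CommRing R] {A₁ A₂ A₃ : Cx R} (φ₂ : Mor A₂ A₂)
    (cup : Cup A₁ A₂ A₃) (n m k : ℤ) (hk : n + m = k)
    (p : A₁.X n × A₁.X (n + 1)) (q : A₂.X m × A₂.X (m + 1)) :
    A₃.X (k + 1) × A₃.X (k + 1 + 1) :=
  (cup.c (n + 1) m (k + 1) (by omega) p.2 q.1
      + (Int.negOnePow (m + 1) : ℤ) •
          cup.c n (m + 1) (k + 1) (by omega) p.1 (φ₂.f (m + 1) q.2),
    cup.c (n + 1) (m + 1) (k + 1 + 1) (by omega) p.2 q.2)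

/-- The homotopy `h_𝒯((x_n,x_{n+1}) ⊗ (y_m,y_{m+1})) =
  (-1)^n (𝒯₃₄(x_n ∪ y_m), 0)`. -/
def hTrans {R : Type} [CommRing R] {A₁ A₂ A₃ A₄ : Cx R}
    (T34 : Mor A₃ A₄) (cup12 : Cup A₁ A₂ A₃)
    (n m k : ℤ) (hk : n + m = k)
    (p : A₁.X n × A₁.X (n + 1)) (q : A₂.X m × A₂.X (m + 1)) :
    A₄.X k × A₄.X (k + 1) :=
  ((Int.negOnePow n : ℤ) • T34.f k (cup12.c n m k hk p.1 q.1), 0)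

/-!
The homotopy does not involve the `𝒯`'s: for any morphism `T`, `T ∘ h` is a homotopy between
`T ∘ ∪'ᵀ` and `T ∘ ∪ᵀ`, where `∪'ᵀ` is the variant of the cup product on total complexes in which
`φ` acts on the first factor instead of the second; this is a direct computation with the Leibniz
rule. The square d), together with `𝒯₁ φ₁ = φ₁ 𝒯₁`, identifies `∪ᵀ ∘ s₁₂ ∘ (𝒯₁ ⊗ 𝒯₂)` with
`𝒯₃₄ ∘ ∪'ᵀ`: the Koszul signs collapse because `(n+1)(m+1) + n(m+1) ≡ m+1` and
`(n+1)(m+1) + (n+1) + (n+1)m ≡ 0` modulo 2.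
-/

section HomotopyOfCupProducts

variable {R : Type} [CommRing R]

theorem Int.negOnePow_smul_negOnePow_smul {M : Type*} [AddCommGroup M] (n : ℤ) (x : M) :
    (n.negOnePow : ℤ) • (n.negOnePow : ℤ) • x = x := by
  rw [smul_smul, ← Units.val_mul, Int.units_mul_self, Units.val_one, one_smul]

theorem Int.negOnePow_smul_negOnePow_smul_eq_add {M : Type*} [AddCommGroup M] (a b : ℤ) (x : M) :
    (a.negOnePow : ℤ) • (b.negOnePow : ℤ) • x = ((a + b).negOnePow : ℤ) • x := by
  rw [smul_smul, ← Units.val_mul, Int.negOnePow_add]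

theorem Td_mk_zero (A : Cx R) (φ : Mor A A) (n : ℤ) (x : A.X n) :
    Td A φ n (x, 0) = (A.d n x, 0) := by
  simp [Td]

def cupT' {A₁ A₂ A₃ : Cx R} (φ₁ : Mor A₁ A₁) (cup : Cup A₁ A₂ A₃) (n m k : ℤ) (hk : n + m = k)
    (p : A₁.X n × A₁.X (n + 1)) (q : A₂.X m × A₂.X (m + 1)) :
    A₃.X (k + 1) × A₃.X (k + 1 + 1) :=
  (cup.c (n + 1) m (k + 1) (by omega) (φ₁.f (n + 1) p.2) q.1
      + (Int.negOnePow (m + 1) : ℤ) • cup.c n (m + 1) (k + 1) (by omega) p.1 q.2,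
    cup.c (n + 1) (m + 1) (k + 1 + 1) (by omega) p.2 q.2)

theorem hTrans_homotopy {A₁ A₂ A₃ A₄ : Cx R} (φ₁ : Mor A₁ A₁) (φ₂ : Mor A₂ A₂) (φ₄ : Mor A₄ A₄)
    (T : Mor A₃ A₄) (cup : Cup A₁ A₂ A₃) (n m k : ℤ) (hk : n + m = k)
    (p : A₁.X n × A₁.X (n + 1)) (q : A₂.X m × A₂.X (m + 1)) :
    Td A₄ φ₄ k (hTrans T cup n m k hk p q)
        + hTrans T cup (n + 1) m (k + 1) (by omega) (Td A₁ φ₁ n p) q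
        + (Int.negOnePow (n + 1) : ℤ) • hTrans T cup n (m + 1) (k + 1) (by omega) p (Td A₂ φ₂ m q)
      = Tmor T (k + 1) (cupT' φ₁ cup n m k hk p q) - Tmor T (k + 1) (cupT φ₂ cup n m k hk p q) := by
  ext
  · simp only [hTrans, Td_mk_zero, Prod.fst_add, Prod.fst_sub, Prod.smul_fst]
    simp only [Td, cupT', cupT, Tmor]
    rw [map_zsmul, T.comm, cup.leib]
    simp only [map_add, map_sub, map_zsmul, LinearMap.add_apply, LinearMap.sub_apply,
      LinearMap.smul_apply, smul_add, smul_sub, Int.negOnePow_smul_negOnePow_smul]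
    simp only [Int.negOnePow_succ, Units.val_neg, neg_smul, smul_neg, neg_neg,
      Int.negOnePow_smul_negOnePow_smul]
    abel
  · simp [hTrans, Td, cupT', cupT, Tmor]

def Cup.SwapCompatible {A₁ A₂ A₃ A₄ : Cx R} (cup12 : Cup A₁ A₂ A₃) (cup21 : Cup A₂ A₁ A₄)
    (T1 : Mor A₁ A₁) (T2 : Mor A₂ A₂) (T34 : Mor A₃ A₄) : Prop :=
  ∀ (n m k : ℤ) (hk : n + m = k) (x : A₁.X n) (y : A₂.X m),
    (Int.negOnePow (n * m) : ℤ) • cup21.c m n k ((add_comm m n).trans hk) (T2.f m y) (T1.f n x)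
      = T34.f k (cup12.c n m k hk x y)

theorem Cup.SwapCompatible.swap_eq_negOnePow_smul {A₁ A₂ A₃ A₄ : Cx R} {cup12 : Cup A₁ A₂ A₃}
    {cup21 : Cup A₂ A₁ A₄} {T1 : Mor A₁ A₁} {T2 : Mor A₂ A₂} {T34 : Mor A₃ A₄}
    (hsquare : cup12.SwapCompatible cup21 T1 T2 T34)
    {n m k : ℤ} (hk : m + n = k) (x : A₁.X n) (y : A₂.X m) :
    cup21.c m n k hk (T2.f m y) (T1.f n x)
      = ((n * m).negOnePow : ℤ) • T34.f k (cup12.c n m k ((add_comm n m).trans hk) x y) := by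
  rw [← hsquare, Int.negOnePow_smul_negOnePow_smul]

theorem negOnePow_smul_cupT_swap {A₁ A₂ A₃ A₄ : Cx R} (φ₁ : Mor A₁ A₁)
    (cup12 : Cup A₁ A₂ A₃) (cup21 : Cup A₂ A₁ A₄) (T1 : Mor A₁ A₁) (T2 : Mor A₂ A₂)
    (T34 : Mor A₃ A₄)
    (hT1 : ∀ (n : ℤ) (x : A₁.X n), T1.f n (φ₁.f n x) = φ₁.f n (T1.f n x))
    (hsquare : cup12.SwapCompatible cup21 T1 T2 T34)
    (n m k : ℤ) (hk : n + m = k) (p : A₁.X n × A₁.X (n + 1)) (q : A₂.X m × A₂.X (m + 1)) :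
    (Int.negOnePow ((n + 1) * (m + 1)) : ℤ) •
        cupT φ₁ cup21 m n k ((add_comm m n).trans hk) (Tmor T2 m q) (Tmor T1 n p)
      = Tmor T34 (k + 1) (cupT' φ₁ cup12 n m k hk p q) := by
  have hsign₁ : ((n + 1) * (m + 1) + n * (m + 1)).negOnePow = (m + 1).negOnePow :=
    (Int.negOnePow_eq_iff _ _).2 ⟨n * (m + 1), by ring⟩
  have hsign₂ : ((n + 1) * (m + 1) + ((n + 1) + (n + 1) * m)).negOnePow = 1 :=
    Int.negOnePow_even _ ⟨(n + 1) * (m + 1), by ring⟩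
  ext
  · simp only [cupT, cupT', Tmor, Prod.smul_fst, ← hT1, hsquare.swap_eq_negOnePow_smul,
      smul_add, map_add, map_zsmul, Int.negOnePow_smul_negOnePow_smul_eq_add, hsign₁, hsign₂,
      Units.val_one, one_smul]
    exact add_comm _ _
  · simp only [cupT, cupT', Tmor, Prod.smul_snd, hsquare.swap_eq_negOnePow_smul,
      Int.negOnePow_smul_negOnePow_smul]

end HomotopyOfCupProducts

/-- Under the hypotheses a)–d) on `(Aᵢ•, φᵢ)` (1 ≤ i ≤ 4),
the endomorphisms `𝒯₁, 𝒯₂`, the morphism `𝒯₃₄` and the cup products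
`∪_A : A₁ ⊗ A₂ → A₃`, `∪'_A : A₂ ⊗ A₁ → A₄`, the morphisms
`𝒯₃₄ ∘ ∪ᵀ_A` and `∪ᵀ_A ∘ s₁₂ ∘ (𝒯₁ ⊗ 𝒯₂)` on total complexes are homotopic,
with the explicit homotopy `h_𝒯(p ⊗ q) = (-1)^{deg p - 1}(𝒯₃₄(p₁ ∪ q₁), 0)`. -/
theorem statement3 {R : Type} [CommRing R] (A₁ A₂ A₃ A₄ : Cx R)
    (φ₁ : Mor A₁ A₁) (φ₂ : Mor A₂ A₂) (φ₄ : Mor A₄ A₄)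
    (cup12 : Cup A₁ A₂ A₃) (cup21 : Cup A₂ A₁ A₄)
    -- b) endomorphisms 𝒯₁, 𝒯₂ commuting with φ₁, φ₂
    (T1 : Mor A₁ A₁) (T2 : Mor A₂ A₂)
    (hT1 : ∀ (n : ℤ) (x : A₁.X n), T1.f n (φ₁.f n x) = φ₁.f n (T1.f n x))
    (T34 : Mor A₃ A₄)
    -- d) ∪'_A ∘ s₁₂ ∘ (𝒯₁ ⊗ 𝒯₂) = 𝒯₃₄ ∘ ∪_A
    (hsquare : ∀ (n m k : ℤ) (hk : n + m = k) (x : A₁.X n) (y : A₂.X m),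
      (Int.negOnePow (n * m) : ℤ) • cup21.c m n k (by omega) (T2.f m y) (T1.f n x)
        = T34.f k (cup12.c n m k hk x y)) :
    ∀ (n m k : ℤ) (hk : n + m = k)
      (p : A₁.X n × A₁.X (n + 1)) (q : A₂.X m × A₂.X (m + 1)),
      Td A₄ φ₄ k (hTrans T34 cup12 n m k hk p q)
          + hTrans T34 cup12 (n + 1) m (k + 1) (by omega) (Td A₁ φ₁ n p) q
          + (Int.negOnePow (n + 1) : ℤ) •
              hTrans T34 cup12 n (m + 1) (k + 1) (by omega) p (Td A₂ φ₂ m q)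
        = (Int.negOnePow ((n + 1) * (m + 1)) : ℤ) •
              cupT φ₁ cup21 m n k (by omega) (Tmor T2 m q) (Tmor T1 n p)
            - Tmor T34 (k + 1) (cupT φ₂ cup12 n m k hk p q) := by
  intro n m k hk p q
  rw [negOnePow_smul_cupT_swap φ₁ cup12 cup21 T1 T2 T34 hT1 hsquare]
  exact hTrans_homotopy φ₁ φ₂ φ₄ T34 cup12 n m k hk p q
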